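/- Let H be a cocommutative Hopf algebra, A a cleft right H-comodule algebra with commutative coinvariant algebra B=A^{coH}, and suppose Ω_A={t∈Hom^H(H,A) : t an algebra map} is nonempty; fix t₀∈Ω_A and set u₀=t₀∘S. Then the bijection F: Z¹(H,B) → Ω_A, F(v)=v*t₀ (with inverse t ↦ t*u₀), sends cohomologous 1-cocycles to equivalent elements of Ω_A and conversely; hence F induces a bijection H¹(H,B) → Ω̄_A = Ω_A/∼, where t₁∼t₂ iff there exists an invertible b∈B with b t₁(h) = t₂(h) b for all h∈H. -/

import Mathlib

open TensorProduct Coalgebra HopfAlgebra LinearMap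

noncomputable section

universe u

variable {k : Type u} [CommRing k]
variable {H : Type u} [Ring H] [HopfAlgebra k H]
variable {A : Type u} [Ring A] [Algebra k A]

/-- The coaction `ρ` is coassociative and counital. -/
def IsCoaction (ρ : A →ₗ[k] A ⊗[k] H) : Prop :=
  (∀ a, ρ.rTensor H (ρ a) =
      (TensorProduct.assoc k A H H).symm ((Coalgebra.comul (R := k) (A := H)).lTensor A (ρ a))) ∧
  (∀ a, (TensorProduct.rid k A) ((Coalgebra.counit (R := k) (A := H)).lTensor A (ρ a)) = a)

/-- The coinvariant subalgebra `B = A^{co H}` of a comodule algebra. -/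
def coinv (ρ : A →ₐ[k] A ⊗[k] H) : Subalgebra k A where
  carrier := {a | ρ a = a ⊗ₜ[k] (1 : H)}
  one_mem' := by
    show ρ 1 = (1 : A) ⊗ₜ[k] (1 : H)
    rw [map_one, Algebra.TensorProduct.one_def]
  mul_mem' := by
    intro a b ha hb
    show ρ (a * b) = (a * b) ⊗ₜ[k] (1 : H)
    rw [map_mul, ha, hb, Algebra.TensorProduct.tmul_mul_tmul, one_mul]
  add_mem' := by
    intro a b ha hb
    show ρ (a + b) = (a + b) ⊗ₜ[k] (1 : H)
    rw [map_add, ha, hb, TensorProduct.add_tmul]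
  zero_mem' := by
    show ρ 0 = (0 : A) ⊗ₜ[k] (1 : H)
    rw [map_zero, TensorProduct.zero_tmul]
  algebraMap_mem' := by
    intro r
    show ρ (algebraMap k A r) = (algebraMap k A r) ⊗ₜ[k] (1 : H)
    rw [AlgHom.commutes, Algebra.TensorProduct.algebraMap_apply]

/-- Convolution product on `Hom(H, A)`. -/
def conv (f g : H →ₗ[k] A) : H →ₗ[k] A :=
  (LinearMap.mul' k A) ∘ₗ (TensorProduct.map f g) ∘ₗ Coalgebra.comul

/-- Opposite convolution product `(f ⋆ g)(h) = f(h₍₂₎) g(h₍₁₎)`. -/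
def convOp (f g : H →ₗ[k] A) : H →ₗ[k] A :=
  (LinearMap.mul' k A) ∘ₗ (TensorProduct.map f g) ∘ₗ
    (TensorProduct.comm k H H).toLinearMap ∘ₗ Coalgebra.comul

/-- The rearranged iterated comultiplication `h ↦ h₍₂₎ ⊗ (h₍₁₎ ⊗ h₍₃₎)`. -/
def sweedler213 : H →ₗ[k] H ⊗[k] (H ⊗[k] H) :=
  (TensorProduct.assoc k H H H).toLinearMap
    ∘ₗ (((TensorProduct.comm k H H).toLinearMap).rTensor H)
    ∘ₗ (TensorProduct.assoc k H H H).symm.toLinearMap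
    ∘ₗ ((Coalgebra.comul (R := k) (A := H)).lTensor H) ∘ₗ Coalgebra.comul

/-- `v ∈ C_A(1,1) = Hom(H, B)`, i.e. `ρ(v(h)) = v(h) ⊗ 1`. -/
def memC11 (ρ : A →ₗ[k] A ⊗[k] H) (v : H →ₗ[k] A) : Prop :=
  ∀ h, ρ (v h) = v h ⊗ₜ[k] (1 : H)

/-- `t ∈ C_A(2,1) = Hom^H(H, A)`, i.e. `ρ(t(h)) = t(h₍₁₎) ⊗ h₍₂₎`. -/
def memC21 (ρ : A →ₗ[k] A ⊗[k] H) (t : H →ₗ[k] A) : Prop :=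
  ∀ h, ρ (t h) = TensorProduct.map t LinearMap.id (Coalgebra.comul h)

/-- `u ∈ C_A(1,2)`, i.e. `ρ(u(h)) = u(h₍₂₎) ⊗ S(h₍₁₎)`. -/
def memC12 (ρ : A →ₗ[k] A ⊗[k] H) (u : H →ₗ[k] A) : Prop :=
  ∀ h, ρ (u h) =
    TensorProduct.map u (HopfAlgebra.antipode (R := k))
      ((TensorProduct.comm k H H) (Coalgebra.comul h))

/-- `w ∈ C_A(2,2)`, i.e. `ρ(w(h)) = w(h₍₂₎) ⊗ S(h₍₁₎) h₍₃₎`. -/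
def memC22 (ρ : A →ₗ[k] A ⊗[k] H) (w : H →ₗ[k] A) : Prop :=
  ∀ h, ρ (w h) =
    TensorProduct.map w
      ((LinearMap.mul' k H) ∘ₗ TensorProduct.map (HopfAlgebra.antipode (R := k)) LinearMap.id)
      (sweedler213 h)

/-- `u' ∈ C'_A(2,1)`, i.e. `ρ(u'(h)) = u'(h₍₂₎) ⊗ S̄(h₍₁₎)`. -/
def memC'21 (ρ : A →ₗ[k] A ⊗[k] H) (Sbar : H →ₗ[k] H) (u' : H →ₗ[k] A) : Prop :=
  ∀ h, ρ (u' h) =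
    TensorProduct.map u' Sbar ((TensorProduct.comm k H H) (Coalgebra.comul h))

/-- `w' ∈ C'_A(2,2)`, i.e. `ρ(w'(h)) = w'(h₍₂₎) ⊗ h₍₃₎ S̄(h₍₁₎)`. -/
def memC'22 (ρ : A →ₗ[k] A ⊗[k] H) (Sbar : H →ₗ[k] H) (w' : H →ₗ[k] A) : Prop :=
  ∀ h, ρ (w' h) =
    TensorProduct.map w'
      ((LinearMap.mul' k H) ∘ₗ (TensorProduct.map LinearMap.id Sbar) ∘ₗ
        (TensorProduct.comm k H H).toLinearMap)
      (sweedler213 h)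

end

noncomputable section

variable {k H A : Type u} [CommRing k] [Ring H] [HopfAlgebra k H] [Ring A] [Algebra k A]

/-- the unit `η_B ∘ ε` for the convolution algebra `Hom(H, B)` -/
def unitB (ρ : A →ₐ[k] A ⊗[k] H) : H →ₗ[k] coinv ρ :=
  Algebra.linearMap k (coinv ρ) ∘ₗ Coalgebra.counit

/-- convolution on `Hom(H, B)` -/
def convB {ρ : A →ₐ[k] A ⊗[k] H} (v v₁ : H →ₗ[k] coinv ρ) : H →ₗ[k] coinv ρ :=
  (LinearMap.mul' k (coinv ρ)) ∘ₗ (TensorProduct.map v v₁) ∘ₗ Coalgebra.comul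

/-- `v ∈ Z¹(H, B)`: `v` is convolution invertible and satisfies the Sweedler 1-cocycle
condition `v(hk) = (h₍₁₎ · v(k)) v(h₍₂₎)`. -/
def IsZ1 (ρ : A →ₐ[k] A ⊗[k] H) (act : H →ₗ[k] (coinv ρ) →ₗ[k] (coinv ρ))
    (v : H →ₗ[k] coinv ρ) : Prop :=
  (∃ v' : H →ₗ[k] coinv ρ, convB v v' = unitB ρ ∧ convB v' v = unitB ρ) ∧
  ∀ (h h' : H) (ι : Type u) (r : Coalgebra.Repr k h ι),
    v (h * h') = ∑ i ∈ r.index, act (r.left i) (v h') * v (r.right i)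

/-- `t ∈ Ω_A`: `t` is an `H`-colinear algebra map `H → A`. -/
def IsOmega (ρ : A →ₐ[k] A ⊗[k] H) (t : H →ₗ[k] A) : Prop :=
  memC21 ρ.toLinearMap t ∧ t 1 = 1 ∧ ∀ h h' : H, t (h * h') = t h * t h'

/-- `w ∈ X_A(2,2)`: `w ∈ Hom(H, B)` with `w ∘ S ∈ Z¹(H, B)`. -/
def IsX22 (ρ : A →ₐ[k] A ⊗[k] H) (act : H →ₗ[k] (coinv ρ) →ₗ[k] (coinv ρ))
    (w : H →ₗ[k] coinv ρ) : Prop :=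
  IsZ1 ρ act (w ∘ₗ HopfAlgebra.antipode (R := k))


/-- `v ∼ v₁` in `Z¹(H,B)`: `v = f_b ∗ v₁` for an invertible `b ∈ B`,
where `f_b(h) = (h · b) b⁻¹`. -/
def EquivZ1 {ρ : A →ₐ[k] A ⊗[k] H} (act : H →ₗ[k] (coinv ρ) →ₗ[k] (coinv ρ))
    (v v₁ : H →ₗ[k] coinv ρ) : Prop :=
  ∃ b binv : coinv ρ, b * binv = 1 ∧ binv * b = 1 ∧
    ∀ (h : H) (ι : Type u) (r : Coalgebra.Repr k h ι),
      v h = ∑ i ∈ r.index, act (r.left i) b * binv * v₁ (r.right i)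

/-- `t ∼ t₂` in `Ω_A`: there is an invertible `b ∈ B` with `b t(h) = t₂(h) b` for all `h`. -/
def EquivOmega {ρ : A →ₐ[k] A ⊗[k] H} (t t₂ : H →ₗ[k] A) : Prop :=
  ∃ b binv : coinv ρ, b * binv = 1 ∧ binv * b = 1 ∧
    ∀ h : H, (b : A) * t h = t₂ h * (b : A)

end

/-!
Everything happens in the convolution algebra `Hom(H, A)`. An algebra map `t : H → A` is
convolution invertible with inverse `t ∘ S`; write `T` for `t₀` and `κ(a) = ε(-) a`. The action
on `B` is `h · b = (T κ(b) T⁻¹)(h)`, so the cocycle identity for `v` reads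
`v ∘ (- * y) = T κ(v y) T⁻¹ * v`, while multiplicativity of `g = v * T` reads
`g ∘ (- * y) = g * κ(g y)`. Expanding `(v * T) ∘ (- * y)` by the product rule shows that the two
are equivalent as soon as `v` commutes with the maps `T κ(b) T⁻¹`, which holds because `B` is
commutative and `H` cocommutative. Colinearity of `f * t` is equivalent to `f` being `B`-valued:
`ρ ∘ (f * t) = (ρ ∘ f) * (ρ ∘ t)`, and `ρ ∘ t` is again invertible. Finally `b t(h) = t₁(h) b`
is the identity `κ(b) v T = v₁ T κ(b) = (T κ(b) T⁻¹) v₁ T`, i.e. `v = f_b * v₁`.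
-/

open WithConv

universe u

lemma Coalgebra.sum_counit_right_smul_left {k C ι : Type*} [CommSemiring k] [AddCommMonoid C]
    [Module k C] [Coalgebra k C] {c : C} (𝓡 : Coalgebra.Repr k c ι) :
    ∑ i ∈ 𝓡.index, counit (R := k) (𝓡.right i) • 𝓡.left i = c := by
  simpa only [map_sum, TensorProduct.lift.tmul, flip_apply, lsmul_apply, one_smul]
    using congr(TensorProduct.lift (lsmul k C).flip $(sum_tmul_counit_eq (R := k) 𝓡))

lemma eq_conj_mul_iff_mul_mul_eq {M : Type*} [Monoid M] {T U K K' V V₁ : M}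
    (hTU : T * U = 1) (hUT : U * T = 1) (hKK' : K * K' = 1) (hK'K : K' * K = 1)
    (h₁ : Commute V₁ (T * K * U)) (h₂ : Commute K' (T * K * U)) :
    V = T * K * U * K' * V₁ ↔ K * (V * T) = V₁ * T * K := by
  set D := T * K * U
  have hD : V₁ * T * K = D * V₁ * T := by
    rw [← h₁.eq]; simp only [D, mul_assoc, hUT, mul_one]
  have hKD : K * D * K' = D := by
    rw [mul_assoc, ← h₂.eq, ← mul_assoc, hKK', one_mul]
  rw [hD]
  constructor
  · rintro rfl
    simp only [← mul_assoc, hKD]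
  · intro h
    calc V = K' * K * V * (T * U) := by rw [hK'K, hTU, one_mul, mul_one]
      _ = K' * (K * (V * T)) * U := by simp only [mul_assoc]
      _ = K' * D * V₁ * (T * U) := by rw [h]; simp only [mul_assoc]
      _ = D * K' * V₁ := by rw [h₂.eq, hTU, mul_one]

namespace LinearMap

section Coalgebra

variable {k C A : Type*} [CommSemiring k] [AddCommMonoid C] [Module k C] [Coalgebra k C]
  [Semiring A] [Algebra k A]

variable (k C) in
def constConv : A →+* WithConv (C →ₗ[k] A) where
  toFun a := toConv (toSpanSingleton k A a ∘ₗ counit)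
  map_one' := by ext c; simp [Algebra.algebraMap_eq_smul_one]
  map_mul' a b := by
    ext c
    rw [(ℛ k c).convMul_apply]
    simp only [comp_apply, toSpanSingleton_apply, smul_mul_smul, ← Finset.sum_smul]
    conv_lhs => rw [← sum_counit_smul (ℛ k c)]
    simp only [map_sum, map_smul, smul_eq_mul]
  map_zero' := by ext; simp
  map_add' a b := by ext; simp

lemma constConv_mul_apply (a : A) (f : WithConv (C →ₗ[k] A)) (c : C) :
    (constConv k C a * f) c = a * f c := by
  rw [(ℛ k c).convMul_apply]
  calc _ = a * f (∑ i ∈ (ℛ k c).index, counit (R := k) ((ℛ k c).left i) • (ℛ k c).right i) := by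
        simp [Finset.mul_sum, map_sum, map_smul, constConv]
    _ = a * f c := by rw [sum_counit_smul]

lemma mul_constConv_apply (f : WithConv (C →ₗ[k] A)) (a : A) (c : C) :
    (f * constConv k C a) c = f c * a := by
  rw [(ℛ k c).convMul_apply]
  calc _ = f (∑ i ∈ (ℛ k c).index, counit (R := k) ((ℛ k c).right i) • (ℛ k c).left i) * a := by
        simp [Finset.sum_mul, map_sum, map_smul, constConv]
    _ = f c * a := by rw [Coalgebra.sum_counit_right_smul_left]

lemma commute_toConv [IsCocomm k C] {f g : C →ₗ[k] A} (h : ∀ x y, Commute (f x) (g y)) :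
    Commute (toConv f) (toConv g) := by
  ext c
  rw [convMul_apply, convMul_apply]
  conv_lhs => rw [← comm_comul k c]
  induction comul (R := k) c using TensorProduct.induction_on with
  | zero => simp
  | tmul x y => exact (h y x).eq
  | add x y hx hy => simp only [map_add, hx, hy]

variable {B : Type*} [Semiring B] [Algebra k B]

variable (k C) in
def convMap (φ : B →ₐ[k] A) : WithConv (C →ₗ[k] B) →+* WithConv (C →ₗ[k] A) where
  toFun f := toConv (φ.toLinearMap ∘ₗ f.ofConv)
  map_one' := by ext; simp
  map_mul' f g := congrArg toConv (algHom_comp_convMul_distrib φ f g)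
  map_zero' := by ext; simp
  map_add' f g := by ext; simp

lemma convMap_toConv (φ : B →ₐ[k] A) (f : C →ₗ[k] B) :
    convMap k C φ (toConv f) = toConv (φ.toLinearMap ∘ₗ f) := rfl

lemma convMap_injective {φ : B →ₐ[k] A} (hφ : Function.Injective φ) :
    Function.Injective (convMap k C φ) := fun f g h => by
  ext c; exact hφ congr($h c)

end Coalgebra

lemma forall_repr_eq_sum_iff {k A : Type*} [CommSemiring k] {C : Type u} [AddCommMonoid C]
    [Module k C] [Coalgebra k C] [Semiring A] [Algebra k A] (w f g : C →ₗ[k] A) :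
    (∀ (c : C) (ι : Type u) (r : Coalgebra.Repr k c ι),
        w c = ∑ i ∈ r.index, f (r.left i) * g (r.right i)) ↔
      toConv w = toConv f * toConv g := by
  refine ⟨fun h => ?_, fun h c ι r => ?_⟩
  · ext c; exact (h c _ (ℛ k c)).trans ((ℛ k c).convMul_apply _ _).symm
  · rw [← r.convMul_apply, ← h]

section Bialgebra

variable {k H A : Type*} [CommSemiring k] [Semiring H] [Bialgebra k H] [Semiring A] [Algebra k A]

lemma convMul_apply_one (f g : WithConv (H →ₗ[k] A)) : (f * g) 1 = f 1 * g 1 := by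
  simp [Algebra.TensorProduct.one_def]

lemma map_one_of_isUnit_toConv {g : H →ₗ[k] A} (hg : IsUnit (toConv g))
    (hm : ∀ x y, g (x * y) = g x * g y) : g 1 = 1 := by
  obtain ⟨w, hw⟩ := hg.exists_right_inv
  have h1 : g 1 * w 1 = 1 := by simpa [hw] using (convMul_apply_one (toConv g) w).symm
  calc g 1 = g (1 * 1) * w 1 := by rw [hm, mul_assoc, h1, mul_one]
    _ = 1 := by rw [mul_one, h1]

lemma toConv_comp_mulRight_eq_iff_map_mul (f : H →ₗ[k] A) :
    (∀ y, toConv (f ∘ₗ mulRight k y) = toConv f * constConv k H (f y)) ↔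
      ∀ x y, f (x * y) = f x * f y := by
  refine ⟨fun h x y => ?_, fun h y => ?_⟩
  · rw [← mul_constConv_apply]; exact congr($(h y) x)
  · ext x; rw [mul_constConv_apply]; exact h x y

lemma toConv_convMul_comp_mulRight (f g : H →ₗ[k] A) {y : H} {ι : Type*}
    (𝓡 : Coalgebra.Repr k y ι) :
    toConv ((toConv f * toConv g).ofConv ∘ₗ mulRight k y) =
      ∑ j ∈ 𝓡.index,
        toConv (f ∘ₗ mulRight k (𝓡.left j)) * toConv (g ∘ₗ mulRight k (𝓡.right j)) := by
  ext x
  rw [comp_apply, mulRight_apply, ((ℛ k x).mul 𝓡).convMul_apply]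
  rw [Coalgebra.Repr.mul_index, Finset.sum_product, Finset.sum_comm, ofConv_sum, sum_apply]
  refine Finset.sum_congr rfl fun j _ => ?_
  rw [(ℛ k x).convMul_apply]
  rfl

lemma toConv_convMul_comp_mulRight_eq {F G φ ψ : H →ₗ[k] A} {X Y M N : WithConv (H →ₗ[k] A)}
    (hMN : M * N = 1)
    (hF : ∀ z, toConv (F ∘ₗ mulRight k z) = X * constConv k H (φ z) * M)
    (hG : ∀ z, toConv (G ∘ₗ mulRight k z) = N * constConv k H (ψ z) * Y) (y : H) :
    toConv ((toConv F * toConv G).ofConv ∘ₗ mulRight k y) =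
      X * constConv k H ((toConv φ * toConv ψ) y) * Y := by
  rw [toConv_convMul_comp_mulRight F G (ℛ k y), (ℛ k y).convMul_apply, map_sum, Finset.mul_sum,
    Finset.sum_mul]
  refine Finset.sum_congr rfl fun j _ => ?_
  rw [hF, hG, map_mul]
  simp only [mul_assoc]
  rw [← mul_assoc M, hMN, one_mul]

lemma toConv_includeLeft_comp_mul_map_comul (f g : H →ₗ[k] A) :
    toConv ((Algebra.TensorProduct.includeLeft : A →ₐ[k] A ⊗[k] H).toLinearMap ∘ₗ f) *
        toConv (TensorProduct.map g id ∘ₗ comul) =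
      toConv (TensorProduct.map (toConv f * toConv g).ofConv id ∘ₗ comul) := by
  have hμ : mul' k (A ⊗[k] H) ∘ₗ TensorProduct.map
        ((Algebra.TensorProduct.includeLeft : A →ₐ[k] A ⊗[k] H).toLinearMap ∘ₗ f)
          (TensorProduct.map g id) =
      rTensor H (mul' k A) ∘ₗ (TensorProduct.assoc k A A H).symm.toLinearMap ∘ₗ
        TensorProduct.map f (TensorProduct.map g id) := by
    ext x y z; simp
  apply WithConv.ext
  calc _ = (mul' k (A ⊗[k] H) ∘ₗ TensorProduct.map
        ((Algebra.TensorProduct.includeLeft : A →ₐ[k] A ⊗[k] H).toLinearMap ∘ₗ f)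
          (TensorProduct.map g id)) ∘ₗ lTensor H comul ∘ₗ comul := by
        rw [comp_assoc, ← comp_assoc comul (lTensor H comul), map_comp_lTensor]; rfl
    _ = _ := by rw [hμ]; simp only [coassoc_simps, convMul_def, ofConv_toConv]

end Bialgebra

section HopfAlgebra

variable {k H A : Type*} [CommSemiring k] [Semiring H] [HopfAlgebra k H] [Semiring A] [Algebra k A]

lemma toConv_mul_toConv_comp_antipode (t : H →ₐ[k] A) :
    toConv t.toLinearMap * toConv (t.toLinearMap ∘ₗ antipode k) = 1 :=
  calc _ = toConv (t.toLinearMap ∘ₗ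
        (toConv LinearMap.id * toConv (antipode k) : WithConv (H →ₗ[k] H)).ofConv) := by
        rw [algHom_comp_convMul_distrib]; rfl
    _ = 1 := by rw [id_mul_antipode]; ext; simp

lemma toConv_comp_antipode_mul_toConv (t : H →ₐ[k] A) :
    toConv (t.toLinearMap ∘ₗ antipode k) * toConv t.toLinearMap = 1 :=
  calc _ = toConv (t.toLinearMap ∘ₗ
        (toConv (antipode k) * toConv LinearMap.id : WithConv (H →ₗ[k] H)).ofConv) := by
        rw [algHom_comp_convMul_distrib]; rfl
    _ = 1 := by rw [antipode_mul_id]; ext; simp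

lemma isUnit_toConv (t : H →ₐ[k] A) : IsUnit (toConv t.toLinearMap) :=
  isUnit_iff_exists.mpr
    ⟨_, toConv_mul_toConv_comp_antipode t, toConv_comp_antipode_mul_toConv t⟩

lemma toConv_comp_antipode_comp_mulRight (t : H →ₐ[k] A) (y : H) :
    toConv ((t.toLinearMap ∘ₗ antipode k) ∘ₗ mulRight k y) =
      constConv k H (t (antipode k y)) * toConv (t.toLinearMap ∘ₗ antipode k) := by
  ext x
  rw [constConv_mul_apply]
  simp [antipode_mul_antidistrib]

/-- `h ↦ t(h₍₁₎) a t(S h₍₂₎)`: the action of `H` on `A` induced by the algebra map `t`. -/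
noncomputable def convAd (t : H →ₐ[k] A) (a : A) : WithConv (H →ₗ[k] A) :=
  toConv t.toLinearMap * constConv k H a * toConv (t.toLinearMap ∘ₗ antipode k)

/-- `f * t` is multiplicative iff `f` is a cocycle for the action `convAd t`. -/
theorem map_mul_convMul_iff (t : H →ₐ[k] A) (f : H →ₗ[k] A)
    (hf : ∀ y, Commute (toConv f) (convAd t (f y))) :
    (∀ x y, (toConv f * toConv t.toLinearMap) (x * y) =
        (toConv f * toConv t.toLinearMap) x * (toConv f * toConv t.toLinearMap) y) ↔
      ∀ y, toConv (f ∘ₗ mulRight k y) = convAd t (f y) * toConv f := by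
  set T := toConv t.toLinearMap
  set U := toConv (t.toLinearMap ∘ₗ antipode k)
  have hTU : T * U = 1 := toConv_mul_toConv_comp_antipode t
  have hUT : U * T = 1 := toConv_comp_antipode_mul_toConv t
  have hT (z : H) : toConv (t.toLinearMap ∘ₗ mulRight k z) = T * constConv k H (t z) * 1 := by
    rw [mul_one, (toConv_comp_mulRight_eq_iff_map_mul _).mpr (fun _ _ => map_mul t _ _)]
    rfl
  have hU (z : H) : toConv ((t.toLinearMap ∘ₗ antipode k) ∘ₗ mulRight k z) =
      1 * constConv k H (t (antipode k z)) * U := by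
    rw [one_mul, toConv_comp_antipode_comp_mulRight]
  rw [← toConv_comp_mulRight_eq_iff_map_mul]
  constructor
  · intro hg y
    set g := (toConv f * T).ofConv with hgdef
    have hfg : f = (toConv g * U).ofConv := by
      rw [hgdef, toConv_ofConv, mul_assoc, hTU, mul_one]
    have key := toConv_convMul_comp_mulRight_eq (F := g) (φ := g)
      (ψ := t.toLinearMap ∘ₗ antipode k) (mul_one 1) (fun z => (hg z).trans (mul_one _).symm) hU y
    rw [← hfg] at key
    rw [key, hgdef, toConv_ofConv, ← (hf y).eq, convAd]
    simp only [mul_assoc]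
    rfl
  · intro hc y
    have hF (z : H) : toConv (f ∘ₗ mulRight k z) = (toConv f * T) * constConv k H (f z) * U := by
      rw [hc z, ← (hf z).eq, convAd]
      simp only [mul_assoc]
      rfl
    exact (toConv_convMul_comp_mulRight_eq (ψ := t.toLinearMap) hUT hF hT y).trans (mul_one _)

end HopfAlgebra

end LinearMap

section ComoduleAlgebra

open LinearMap

variable {k H A : Type u} [CommRing k] [Ring H] [HopfAlgebra k H] [Ring A] [Algebra k A]
  {ρ : A →ₐ[k] A ⊗[k] H} {t : H →ₐ[k] A} {act : H →ₗ[k] coinv ρ →ₗ[k] coinv ρ}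

lemma conv_eq_ofConv (f g : H →ₗ[k] A) : conv f g = (toConv f * toConv g).ofConv := rfl

lemma conv_left_injective (t : H →ₐ[k] A) :
    Function.Injective fun f : H →ₗ[k] A => conv f t.toLinearMap := fun _ _ h =>
  toConv_injective <| (isUnit_toConv t).mul_left_injective <| ofConv_injective h

lemma conv_conv_comp_antipode (s t : H →ₐ[k] A) :
    conv (conv s.toLinearMap (t.toLinearMap ∘ₗ antipode k)) t.toLinearMap = s.toLinearMap := by
  simp only [conv_eq_ofConv, toConv_ofConv, mul_assoc, toConv_comp_antipode_mul_toConv, mul_one]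

lemma toConv_conv_mul_toConv_conv (s t : H →ₐ[k] A) :
    toConv (conv s.toLinearMap (t.toLinearMap ∘ₗ antipode k)) *
      toConv (conv t.toLinearMap (s.toLinearMap ∘ₗ antipode k)) = 1 := by
  simp only [conv_eq_ofConv, toConv_ofConv]
  rw [mul_assoc, ← mul_assoc (toConv (t.toLinearMap ∘ₗ antipode k)),
    toConv_comp_antipode_mul_toConv, one_mul, toConv_mul_toConv_comp_antipode]

lemma memC21_iff_toConv (g : H →ₗ[k] A) :
    memC21 ρ.toLinearMap g ↔
      toConv (ρ.toLinearMap ∘ₗ g) = toConv (TensorProduct.map g id ∘ₗ comul) := by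
  simp [memC21, WithConv.ext_iff, LinearMap.ext_iff]

lemma memC21_conv_iff (ht : memC21 ρ.toLinearMap t.toLinearMap) (f : H →ₗ[k] A) :
    memC21 ρ.toLinearMap (conv f t.toLinearMap) ↔ ∀ h, f h ∈ coinv ρ := by
  have hρt := (memC21_iff_toConv _).mp ht
  rw [memC21_iff_toConv, conv_eq_ofConv, ← convMap_toConv ρ, toConv_ofConv, map_mul,
    convMap_toConv, convMap_toConv, ← toConv_includeLeft_comp_mul_map_comul, ← hρt]
  -- `ρ ∘ t` is an algebra map, hence convolution invertible
  rw [← AlgHom.comp_toLinearMap, (isUnit_toConv _).mul_left_inj]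
  exact WithConv.ext_iff.trans LinearMap.ext_iff

lemma commute_toConv_of_mem_coinv (hB : ∀ b b' : coinv ρ, b * b' = b' * b) [IsCocomm k H]
    {f g : H →ₗ[k] A} (hf : ∀ x, f x ∈ coinv ρ) (hg : ∀ x, g x ∈ coinv ρ) :
    Commute (toConv f) (toConv g) :=
  commute_toConv fun x y => congrArg Subtype.val (hB ⟨_, hf x⟩ ⟨_, hg y⟩)

lemma convB_eq_unitB_iff (v w : H →ₗ[k] coinv ρ) :
    convB v w = unitB ρ ↔
      toConv ((coinv ρ).val.toLinearMap ∘ₗ v) * toConv ((coinv ρ).val.toLinearMap ∘ₗ w) = 1 := by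
  rw [← convMap_toConv, ← convMap_toConv, ← map_mul, ← map_one (convMap k H (coinv ρ).val),
    (convMap_injective Subtype.val_injective).eq_iff]
  exact toConv_injective.eq_iff.symm

lemma toConv_val_comp_flip_act
    (hact : ∀ (h : H) (b : coinv ρ) (ι : Type u) (r : Coalgebra.Repr k h ι),
      ((act h b : A)) = ∑ i ∈ r.index, t (r.left i) * (b : A) *
        (t.toLinearMap ∘ₗ antipode k) (r.right i))
    (b : coinv ρ) :
    toConv ((coinv ρ).val.toLinearMap ∘ₗ act.flip b) = convAd t b := by
  ext h
  change ((act h b : A)) = _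
  rw [hact h b _ (ℛ k h), convAd, (ℛ k h).convMul_apply]
  simp only [mul_constConv_apply]
  rfl

lemma isZ1_cocycle_iff
    (hact : ∀ b : coinv ρ, toConv ((coinv ρ).val.toLinearMap ∘ₗ act.flip b) = convAd t b)
    (v : H →ₗ[k] coinv ρ) :
    (∀ (h h' : H) (ι : Type u) (r : Coalgebra.Repr k h ι),
        v (h * h') = ∑ i ∈ r.index, act (r.left i) (v h') * v (r.right i)) ↔
      ∀ y, toConv ((coinv ρ).val.toLinearMap ∘ₗ v ∘ₗ mulRight k y) =
        convAd t (v y) * toConv ((coinv ρ).val.toLinearMap ∘ₗ v) := by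
  rw [forall_comm]
  refine forall_congr' fun y =>
    (forall_repr_eq_sum_iff (v ∘ₗ mulRight k y) (act.flip (v y)) v).trans ?_
  rw [← (convMap_injective (C := H) (φ := (coinv ρ).val) Subtype.val_injective).eq_iff,
    map_mul, convMap_toConv, convMap_toConv, convMap_toConv, hact]

lemma map_mul_conv_iff_isZ1_cocycle (hB : ∀ b b' : coinv ρ, b * b' = b' * b) [IsCocomm k H]
    (hact : ∀ b : coinv ρ, toConv ((coinv ρ).val.toLinearMap ∘ₗ act.flip b) = convAd t b)
    (v : H →ₗ[k] coinv ρ) :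
    (∀ x y, conv ((coinv ρ).val.toLinearMap ∘ₗ v) t.toLinearMap (x * y) =
        conv ((coinv ρ).val.toLinearMap ∘ₗ v) t.toLinearMap x *
          conv ((coinv ρ).val.toLinearMap ∘ₗ v) t.toLinearMap y) ↔
      ∀ (h h' : H) (ι : Type u) (r : Coalgebra.Repr k h ι),
        v (h * h') = ∑ i ∈ r.index, act (r.left i) (v h') * v (r.right i) := by
  refine (map_mul_convMul_iff t _ fun y => ?_).trans (isZ1_cocycle_iff hact v).symm
  have h := commute_toConv_of_mem_coinv hB (f := (coinv ρ).val.toLinearMap ∘ₗ v)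
    (g := (coinv ρ).val.toLinearMap ∘ₗ act.flip (v y)) (fun x => (v x).2)
    (fun x => (act x (v y)).2)
  rwa [hact] at h

lemma isUnit_toConv_of_isZ1 {v : H →ₗ[k] coinv ρ} (hv : IsZ1 ρ act v) :
    IsUnit (toConv ((coinv ρ).val.toLinearMap ∘ₗ v)) :=
  let ⟨⟨v', hvv', hv'v⟩, _⟩ := hv
  isUnit_iff_exists.mpr
    ⟨_, (convB_eq_unitB_iff v v').mp hvv', (convB_eq_unitB_iff v' v).mp hv'v⟩

theorem isOmega_conv_of_isZ1 (hB : ∀ b b' : coinv ρ, b * b' = b' * b) [IsCocomm k H]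
    (ht : memC21 ρ.toLinearMap t.toLinearMap)
    (hact : ∀ b : coinv ρ, toConv ((coinv ρ).val.toLinearMap ∘ₗ act.flip b) = convAd t b)
    {v : H →ₗ[k] coinv ρ} (hv : IsZ1 ρ act v) :
    IsOmega ρ (conv ((coinv ρ).val.toLinearMap ∘ₗ v) t.toLinearMap) := by
  have hmul := (map_mul_conv_iff_isZ1_cocycle hB hact v).mpr hv.2
  exact ⟨(memC21_conv_iff ht _).mpr fun h => (v h).2,
    map_one_of_isUnit_toConv ((isUnit_toConv_of_isZ1 hv).mul (isUnit_toConv t)) hmul, hmul⟩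

theorem eq_of_conv_eq {v v₁ : H →ₗ[k] coinv ρ}
    (h : conv ((coinv ρ).val.toLinearMap ∘ₗ v) t.toLinearMap =
      conv ((coinv ρ).val.toLinearMap ∘ₗ v₁) t.toLinearMap) : v = v₁ :=
  (cancel_left Subtype.val_injective).mp (conv_left_injective t h)

theorem exists_isZ1_conv_eq (hB : ∀ b b' : coinv ρ, b * b' = b' * b) [IsCocomm k H]
    (ht : memC21 ρ.toLinearMap t.toLinearMap)
    (hact : ∀ b : coinv ρ, toConv ((coinv ρ).val.toLinearMap ∘ₗ act.flip b) = convAd t b)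
    {s : H →ₐ[k] A} (hs : memC21 ρ.toLinearMap s.toLinearMap) :
    ∃ v : H →ₗ[k] coinv ρ, IsZ1 ρ act v ∧
      conv ((coinv ρ).val.toLinearMap ∘ₗ v) t.toLinearMap = s.toLinearMap ∧
      (coinv ρ).val.toLinearMap ∘ₗ v = conv s.toLinearMap (t.toLinearMap ∘ₗ antipode k) := by
  have hst := conv_conv_comp_antipode s t
  let v := codRestrict (coinv ρ).toSubmodule _ ((memC21_conv_iff ht _).mp (hst ▸ hs))
  let v' := codRestrict (coinv ρ).toSubmodule _
    ((memC21_conv_iff hs _).mp (conv_conv_comp_antipode t s ▸ ht))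
  refine ⟨v, ⟨⟨v', (convB_eq_unitB_iff v v').mpr (toConv_conv_mul_toConv_conv s t),
    (convB_eq_unitB_iff v' v).mpr (toConv_conv_mul_toConv_conv t s)⟩,
    (map_mul_conv_iff_isZ1_cocycle hB hact v).mp ?_⟩, hst, rfl⟩
  rw [show conv ((coinv ρ).val.toLinearMap ∘ₗ v) t.toLinearMap = s.toLinearMap from hst]
  exact map_mul s

theorem equivZ1_iff_equivOmega (hB : ∀ b b' : coinv ρ, b * b' = b' * b) [IsCocomm k H]
    (hact : ∀ b : coinv ρ, toConv ((coinv ρ).val.toLinearMap ∘ₗ act.flip b) = convAd t b)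
    (v v₁ : H →ₗ[k] coinv ρ) :
    EquivZ1 act v v₁ ↔
      EquivOmega (ρ := ρ) (conv ((coinv ρ).val.toLinearMap ∘ₗ v) t.toLinearMap)
        (conv ((coinv ρ).val.toLinearMap ∘ₗ v₁) t.toLinearMap) := by
  refine exists₂_congr fun b b' => and_congr_right fun hbb' => and_congr_right fun hb'b => ?_
  have hK (x y : coinv ρ) (hxy : x * y = 1) :
      constConv k H (x : A) * constConv k H (y : A) = 1 := by
    rw [← map_mul, ← Subalgebra.coe_mul, hxy, Subalgebra.coe_one, map_one]
  have hvB (w : H →ₗ[k] coinv ρ) : ∀ h, ((coinv ρ).val.toLinearMap ∘ₗ w) h ∈ coinv ρ :=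
    fun h => (w h).2
  have hactB : ∀ h, (convAd t b).ofConv h ∈ coinv ρ := by
    rw [← hact]; exact hvB _
  have hb'B : ∀ h, constConv k H (b' : A) h ∈ coinv ρ := fun _ => Subalgebra.smul_mem _ b'.2 _
  calc (∀ (h : H) (ι : Type u) (r : Coalgebra.Repr k h ι),
          v h = ∑ i ∈ r.index, act (r.left i) b * b' * v₁ (r.right i))
      ↔ toConv v = toConv (mulRight k b' ∘ₗ act.flip b) * toConv v₁ :=
        forall_repr_eq_sum_iff v (mulRight k b' ∘ₗ act.flip b) v₁
    _ ↔ toConv ((coinv ρ).val.toLinearMap ∘ₗ v) =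
          convAd t b * constConv k H (b' : A) * toConv ((coinv ρ).val.toLinearMap ∘ₗ v₁) := by
        have hb' : toConv ((coinv ρ).val.toLinearMap ∘ₗ mulRight k b' ∘ₗ act.flip b) =
            toConv ((coinv ρ).val.toLinearMap ∘ₗ act.flip b) * constConv k H (b' : A) := by
          ext x; rw [mul_constConv_apply]; rfl
        rw [← (convMap_injective (C := H) (φ := (coinv ρ).val) Subtype.val_injective).eq_iff,
          map_mul, convMap_toConv, convMap_toConv, convMap_toConv, hb', hact]
    _ ↔ constConv k H (b : A) *
            (toConv ((coinv ρ).val.toLinearMap ∘ₗ v) * toConv t.toLinearMap) =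
          toConv ((coinv ρ).val.toLinearMap ∘ₗ v₁) * toConv t.toLinearMap *
            constConv k H (b : A) :=
        eq_conj_mul_iff_mul_mul_eq (toConv_mul_toConv_comp_antipode t)
          (toConv_comp_antipode_mul_toConv t) (hK b b' hbb') (hK b' b hb'b)
          (commute_toConv_of_mem_coinv hB (hvB v₁) hactB)
          (commute_toConv_of_mem_coinv hB hb'B hactB)
    _ ↔ ∀ h, (b : A) * conv ((coinv ρ).val.toLinearMap ∘ₗ v) t.toLinearMap h =
          conv ((coinv ρ).val.toLinearMap ∘ₗ v₁) t.toLinearMap h * b := by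
        simp only [WithConv.ext_iff, LinearMap.ext_iff, constConv_mul_apply, mul_constConv_apply]
        rfl

end ComoduleAlgebra

variable {k H A : Type u} [CommRing k] [Ring H] [HopfAlgebra k H] [Ring A] [Algebra k A]

theorem stmt14_H1_classifies_Omega_general
    (hcoc : ∀ h : H, (TensorProduct.comm k H H) (Coalgebra.comul (R := k) h) =
      Coalgebra.comul (R := k) h)
    (ρ : A →ₐ[k] A ⊗[k] H)
    (hBcomm : ∀ b b' : coinv ρ, b * b' = b' * b)
    (t₀ : H →ₗ[k] A) (ht₀ : IsOmega ρ t₀)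
    (act : H →ₗ[k] (coinv ρ) →ₗ[k] (coinv ρ))
    (hact : ∀ (h : H) (b : coinv ρ) (ι : Type u) (r : Coalgebra.Repr k h ι),
      ((act h b : A)) =
        ∑ i ∈ r.index, t₀ (r.left i) * (b : A) *
          (t₀ ∘ₗ HopfAlgebra.antipode (R := k)) (r.right i)) :
    -- `F(v) = v ∗ t₀` maps `Z¹(H,B)` into `Ω_A` …
    (∀ v : H →ₗ[k] coinv ρ, IsZ1 ρ act v →
      IsOmega ρ (conv ((coinv ρ).val.toLinearMap ∘ₗ v) t₀)) ∧
    -- … is injective …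
    (∀ v v₁ : H →ₗ[k] coinv ρ, IsZ1 ρ act v → IsZ1 ρ act v₁ →
      conv ((coinv ρ).val.toLinearMap ∘ₗ v) t₀ =
        conv ((coinv ρ).val.toLinearMap ∘ₗ v₁) t₀ → v = v₁) ∧
    -- … and surjective, with inverse `F⁻¹(t) = t ∗ u₀`
    (∀ t : H →ₗ[k] A, IsOmega ρ t →
      ∃ v : H →ₗ[k] coinv ρ, IsZ1 ρ act v ∧
        conv ((coinv ρ).val.toLinearMap ∘ₗ v) t₀ = t ∧
        (coinv ρ).val.toLinearMap ∘ₗ v =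
          conv t (t₀ ∘ₗ HopfAlgebra.antipode (R := k))) ∧
    -- `F` sends cohomologous cocycles to equivalent elements of `Ω_A`, and conversely;
    -- hence `F` induces a bijection `H¹(H,B) → Ω̄_A`
    (∀ v v₁ : H →ₗ[k] coinv ρ, IsZ1 ρ act v → IsZ1 ρ act v₁ →
      (EquivZ1 act v v₁ ↔
        EquivOmega (ρ := ρ) (conv ((coinv ρ).val.toLinearMap ∘ₗ v) t₀)
          (conv ((coinv ρ).val.toLinearMap ∘ₗ v₁) t₀))) := by
  have : IsCocomm k H := ⟨LinearMap.ext hcoc⟩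
  obtain ⟨ht₀c, ht₀1, ht₀m⟩ := ht₀
  let t := AlgHom.ofLinearMap t₀ ht₀1 ht₀m
  have hact' := toConv_val_comp_flip_act (t := t) hact
  refine ⟨fun v hv => isOmega_conv_of_isZ1 (t := t) hBcomm ht₀c hact' hv,
    fun v v₁ _ _ h => eq_of_conv_eq (t := t) h, fun s hs => ?_,
    fun v v₁ _ _ => equivZ1_iff_equivOmega hBcomm hact' v v₁⟩
  exact exists_isZ1_conv_eq (t := t) (s := AlgHom.ofLinearMap s hs.2.1 hs.2.2) hBcomm ht₀c hact'
    hs.1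

/-- Proposition 5.7: let `H` be a cocommutative Hopf algebra, `A` a cleft
right `H`-comodule algebra with commutative `B = A^{co H}`, `Ω_A ≠ ∅` and `t₀ ∈ Ω_A` fixed,
`u₀ = t₀ ∘ S`.  The bijection `F : Z¹(H,B) → Ω_A`, `F(v) = v ∗ t₀` (inverse `t ↦ t ∗ u₀`),
sends cohomologous cocycles to equivalent elements of `Ω_A` and conversely; hence it induces
a bijection `H¹(H,B) → Ω̄_A`. -/
theorem stmt14_H1_classifies_Omega
    (hcoc : ∀ h : H, (TensorProduct.comm k H H) (Coalgebra.comul (R := k) h) =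
      Coalgebra.comul (R := k) h)
    (ρ : A →ₐ[k] A ⊗[k] H) (hρ : IsCoaction ρ.toLinearMap)
    (hBcomm : ∀ b b' : coinv ρ, b * b' = b' * b)
    (t₀ : H →ₗ[k] A) (ht₀ : IsOmega ρ t₀)
    (act : H →ₗ[k] (coinv ρ) →ₗ[k] (coinv ρ))
    (hact : ∀ (h : H) (b : coinv ρ) (ι : Type u) (r : Coalgebra.Repr k h ι),
      ((act h b : A)) =
        ∑ i ∈ r.index, t₀ (r.left i) * (b : A) *
          (t₀ ∘ₗ HopfAlgebra.antipode (R := k)) (r.right i)) :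
    -- `F(v) = v ∗ t₀` maps `Z¹(H,B)` into `Ω_A` …
    (∀ v : H →ₗ[k] coinv ρ, IsZ1 ρ act v →
      IsOmega ρ (conv ((coinv ρ).val.toLinearMap ∘ₗ v) t₀)) ∧
    -- … is injective …
    (∀ v v₁ : H →ₗ[k] coinv ρ, IsZ1 ρ act v → IsZ1 ρ act v₁ →
      conv ((coinv ρ).val.toLinearMap ∘ₗ v) t₀ =
        conv ((coinv ρ).val.toLinearMap ∘ₗ v₁) t₀ → v = v₁) ∧
    -- … and surjective, with inverse `F⁻¹(t) = t ∗ u₀`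
    (∀ t : H →ₗ[k] A, IsOmega ρ t →
      ∃ v : H →ₗ[k] coinv ρ, IsZ1 ρ act v ∧
        conv ((coinv ρ).val.toLinearMap ∘ₗ v) t₀ = t ∧
        (coinv ρ).val.toLinearMap ∘ₗ v =
          conv t (t₀ ∘ₗ HopfAlgebra.antipode (R := k))) ∧
    -- `F` sends cohomologous cocycles to equivalent elements of `Ω_A`, and conversely;
    -- hence `F` induces a bijection `H¹(H,B) → Ω̄_A`
    (∀ v v₁ : H →ₗ[k] coinv ρ, IsZ1 ρ act v → IsZ1 ρ act v₁ →
      (EquivZ1 act v v₁ ↔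
        EquivOmega (ρ := ρ) (conv ((coinv ρ).val.toLinearMap ∘ₗ v) t₀)
          (conv ((coinv ρ).val.toLinearMap ∘ₗ v₁) t₀))) :=
  stmt14_H1_classifies_Omega_general hcoc ρ hBcomm t₀ ht₀ act hact
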